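/- Let m ∈ ℕ, let α, δ ∈ ℂ^{m×2m} both be admissible, and let M_δ ∈ ℂ^{m×m} be such that K := αδ* + αJδ*M_δ is invertible. Define M_α := (−αJδ* + αδ*M_δ) K^{−1}. Then (α* + Jα*M_α) K = δ* + Jδ*M_δ as 2m×m matrices. (This is the algebraic identity underlying the linear-fractional transformation law M^D_+(ζ,α) = [−αJδ* + αδ* M^D_+(ζ,δ)][αδ* + αJδ* M^D_+(ζ,δ)]^{−1} for Weyl–Titchmarsh matrices under a change of boundary condition.) -/

import Mathlib

open Matrix

/-- The matrix `J = [[0, −I_m],[I_m, 0]]` in `m × m` blocks. -/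
noncomputable def Jmat (m : ℕ) : Matrix (Fin m ⊕ Fin m) (Fin m ⊕ Fin m) ℂ :=
  fromBlocks 0 (-1) 1 0

/-- A matrix `α ∈ ℂ^{m×2m}` is admissible if `αα* = I_m` and `αJα* = 0`. -/
def Admissible {m : ℕ} (α : Matrix (Fin m) (Fin m ⊕ Fin m) ℂ) : Prop :=
  α * αᴴ = 1 ∧ α * Jmat m * αᴴ = 0

/-! The rows of `α` and of `αJ` form an orthonormal basis of `ℂ^{2m}`, so the orthogonal
projections `α*α` and `(αJ)*(αJ) = −Jα*αJ` onto their spans add up to the identity.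
The identity to prove is linear in `δ*` and `δ*M_δ`, and after cancelling `K⁻¹K` it reduces
to `α*α − Jα*αJ = 1` and its consequence `α*αJ + Jα*α = J` (multiply by `J` and use `J² = −1`). -/

theorem Jmat_mul_self (m : ℕ) : Jmat m * Jmat m = -1 := by
  rw [Jmat, fromBlocks_multiply, ← fromBlocks_one, fromBlocks_neg]
  simp

theorem conjTranspose_Jmat (m : ℕ) : (Jmat m)ᴴ = -Jmat m := by
  simp [Jmat, fromBlocks_conjTranspose, fromBlocks_neg]

namespace Admissible

variable {m : ℕ} {α : Matrix (Fin m) (Fin m ⊕ Fin m) ℂ}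

theorem fromRows_mul_conjTranspose (hα : Admissible α) :
    fromRows α (α * Jmat m) * (fromRows α (α * Jmat m))ᴴ = 1 := by
  obtain ⟨hunit, hiso⟩ := hα
  have hJ_rows : α * Jmat m * (α * Jmat m)ᴴ = 1 := by
    rw [conjTranspose_mul, conjTranspose_Jmat, Matrix.neg_mul, Matrix.mul_neg,
      Matrix.mul_assoc α, ← Matrix.mul_assoc (Jmat m), Jmat_mul_self, Matrix.neg_mul,
      Matrix.one_mul, Matrix.mul_neg, neg_neg, hunit]
  have hcross : α * (α * Jmat m)ᴴ = 0 := by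
    rw [conjTranspose_mul, conjTranspose_Jmat, Matrix.neg_mul, Matrix.mul_neg,
      ← Matrix.mul_assoc, hiso, neg_zero]
  rw [conjTranspose_fromRows_eq_fromCols_conjTranspose, fromRows_mul_fromCols, hunit, hJ_rows,
    hcross, hiso, fromBlocks_one]

theorem conjTranspose_mul_sub (hα : Admissible α) :
    αᴴ * α - Jmat m * (αᴴ * α) * Jmat m = 1 := by
  have h := mul_eq_one_comm.mp hα.fromRows_mul_conjTranspose
  rw [conjTranspose_fromRows_eq_fromCols_conjTranspose, fromCols_mul_fromRows, conjTranspose_mul,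
    conjTranspose_Jmat] at h
  rw [← h, Matrix.neg_mul, Matrix.neg_mul, sub_eq_add_neg]
  simp only [Matrix.mul_assoc]

theorem conjTranspose_mul_Jmat_add (hα : Admissible α) :
    αᴴ * α * Jmat m + Jmat m * (αᴴ * α) = Jmat m := by
  have h := congrArg (Jmat m * ·) hα.conjTranspose_mul_sub
  simp only [Matrix.mul_sub, Matrix.mul_one, ← Matrix.mul_assoc, Jmat_mul_self,
    Matrix.neg_mul, Matrix.one_mul, sub_neg_eq_add] at h
  convert h using 1
  rw [add_comm]
  simp only [Matrix.mul_assoc]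

end Admissible

theorem statement2_general (m : ℕ) (α δ : Matrix (Fin m) (Fin m ⊕ Fin m) ℂ)
    (hα : Admissible α) (Mδ : Matrix (Fin m) (Fin m) ℂ)
    (hK : IsUnit (α * δᴴ + α * Jmat m * δᴴ * Mδ)) :
    (αᴴ + Jmat m * αᴴ *
        ((-(α * Jmat m * δᴴ) + α * δᴴ * Mδ) * (α * δᴴ + α * Jmat m * δᴴ * Mδ)⁻¹)) *
      (α * δᴴ + α * Jmat m * δᴴ * Mδ)
      = δᴴ + Jmat m * δᴴ * Mδ := by
  have hdet := (Matrix.isUnit_iff_isUnit_det _).mp hK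
  rw [Matrix.add_mul, Matrix.mul_assoc (Jmat m * αᴴ),
    Matrix.nonsing_inv_mul_cancel_right _ _ hdet]
  calc αᴴ * (α * δᴴ + α * Jmat m * δᴴ * Mδ)
        + Jmat m * αᴴ * (-(α * Jmat m * δᴴ) + α * δᴴ * Mδ)
      = (αᴴ * α - Jmat m * (αᴴ * α) * Jmat m) * δᴴ
        + (αᴴ * α * Jmat m + Jmat m * (αᴴ * α)) * δᴴ * Mδ := by
        simp only [Matrix.mul_add, Matrix.add_mul, Matrix.sub_mul, Matrix.mul_neg,
          Matrix.mul_assoc]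
        abel
    _ = δᴴ + Jmat m * δᴴ * Mδ := by
      rw [hα.conjTranspose_mul_sub, hα.conjTranspose_mul_Jmat_add, Matrix.one_mul]

/-- the algebraic identity behind the linear-fractional transformation law
for Weyl–Titchmarsh matrices under a change of boundary condition: if
`K := αδ* + αJδ*M_δ` is invertible and `M_α := (−αJδ* + αδ*M_δ)K⁻¹`, then
`(α* + Jα*M_α)K = δ* + Jδ*M_δ`. -/
theorem statement2 (m : ℕ) (α δ : Matrix (Fin m) (Fin m ⊕ Fin m) ℂ)
    (hα : Admissible α) (hδ : Admissible δ) (Mδ : Matrix (Fin m) (Fin m) ℂ)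
    (hK : IsUnit (α * δᴴ + α * Jmat m * δᴴ * Mδ)) :
    (αᴴ + Jmat m * αᴴ *
        ((-(α * Jmat m * δᴴ) + α * δᴴ * Mδ) * (α * δᴴ + α * Jmat m * δᴴ * Mδ)⁻¹)) *
      (α * δᴴ + α * Jmat m * δᴴ * Mδ)
      = δᴴ + Jmat m * δᴴ * Mδ :=
  statement2_general m α δ hα Mδ hK
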